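/- arXiv:math/0004065 — 2 statements merged into one kernel-verified Lean document; each statement's English description precedes it below -/
import Mathlib

section
/- Let A, B, C be real polynomials in three variables x1, x2, x3 satisfying the three identities: (x1²+x2²+x3²)(∂A/∂x2 − ∂B/∂x1) = 2(A·x2 − B·x1), (x1²+x2²+x3²)(∂A/∂x3 − ∂C/∂x1) = 2(A·x3 − C·x1), and (x1²+x2²+x3²)(∂B/∂x3 − ∂C/∂x2) = 2(B·x3 − C·x2). Then there exist polynomials Ã, B̃, C̃ and a real constant a such that A = a·x1 + (x1²+x2²+x3²)·Ã, B = a·x2 + (x1²+x2²+x3²)·B̃, C = a·x3 + (x1²+x2²+x3²)·C̃, with ∂Ã/∂x2 = ∂B̃/∂x1, ∂Ã/∂x3 = ∂C̃/∂x1, and ∂B̃/∂x3 = ∂C̃/∂x2. -/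
/-!
Write `r² = ∑ xᵢ²` and `φ = ∑ xᵢ Fᵢ` for `F = (A, B, C)`. The hypothesis says that `F / r²` is
curl free. Contracting it with `x` gives `r² (2 Fⱼ + ∑ᵢ xᵢ (∂ⱼ Fᵢ - ∂ᵢ Fⱼ)) = 2 xⱼ φ`; as two
distinct variables are coprime, `r² ∣ 2 φ`, say `2 φ = r² Q`. Differentiating this identity yields
`2 (E - 1) Fⱼ = r² ∂ⱼ Q` for the Euler operator `E = ∑ xᵢ ∂ᵢ`, so every homogeneous component of
`Fⱼ` other than the linear one is divisible by `r²`. The curl of `F` has no constant term, because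
`x ∧ curl F = 0` and there is a third variable, so the contracted identity shows that the linear
component of `Fⱼ` is `Q(0) xⱼ / 2`. Finally, once `F = a x + r² G`, the hypothesis becomes
`r⁴ curl G = 0`.
-/

open MvPolynomial Finset

theorem Fintype.exists_ne_and_ne_of_two_lt_card {α : Type*} [Fintype α]
    (h : 2 < Fintype.card α) (i j : α) : ∃ k, k ≠ i ∧ k ≠ j := by
  classical
  obtain ⟨k, hk⟩ : ((univ.erase i).erase j).Nonempty := by
    have hj := pred_card_le_card_erase (s := univ.erase i) (a := j)
    have hi := pred_card_le_card_erase (s := (univ : Finset α)) (a := i)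
    rw [card_univ] at hi
    rw [← Finset.card_pos]
    omega
  exact ⟨k, ne_of_mem_erase (mem_of_mem_erase hk), ne_of_mem_erase hk⟩

namespace MvPolynomial

variable {σ R K : Type*}

theorem IsHomogeneous.homogeneousComponent_add_mul [CommSemiring R] {φ : MvPolynomial σ R}
    {d : ℕ} (hφ : φ.IsHomogeneous d) (n : ℕ) (g : MvPolynomial σ R) :
    homogeneousComponent (n + d) (φ * g) = φ * homogeneousComponent n g := by
  induction g using MvPolynomial.induction_on' with
  | monomial s a =>
    have hs : (monomial s a).IsHomogeneous (Finsupp.degree s) := isHomogeneous_monomial a rfl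
    rw [homogeneousComponent_of_mem (hφ.mul hs), homogeneousComponent_of_mem hs]
    by_cases h : n = Finsupp.degree s
    · rw [if_pos (by omega), if_pos h]
    · rw [if_neg (by omega), if_neg h, mul_zero]
  | add f g hf hg => rw [mul_add, map_add, hf, hg, map_add, mul_add]

theorem dvd_of_dvd_X_mul_of_dvd_X_mul [CommRing R] [IsDomain R] {i j : σ} (hij : i ≠ j)
    {p g : MvPolynomial σ R} (hi : p ∣ X i * g) (hj : p ∣ X j * g) : p ∣ g := by
  obtain ⟨a, ha⟩ := hi
  obtain ⟨b, hb⟩ := hj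
  rcases eq_or_ne p 0 with rfl | hp
  · simpa [X_ne_zero] using ha
  have hab : X j * a = X i * b :=
    mul_left_cancel₀ hp (by linear_combination X i * hb - X j * ha)
  obtain ⟨c, rfl⟩ : X i ∣ a :=
    (X_prime.dvd_or_dvd ⟨b, hab⟩).resolve_left (by simpa using hij)
  exact ⟨c, mul_left_cancel₀ (X_ne_zero i) (by linear_combination ha)⟩

variable [Fintype σ]

section CommSemiring
variable [CommSemiring R]

noncomputable def euler (f : MvPolynomial σ R) : MvPolynomial σ R := ∑ i, X i * pderiv i f

theorem homogeneousComponent_euler (n : ℕ) (f : MvPolynomial σ R) :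
    homogeneousComponent n (euler f) = n • homogeneousComponent n f := by
  induction f using MvPolynomial.induction_on' with
  | monomial s a =>
    have hs : (monomial s a).IsHomogeneous (Finsupp.degree s) := isHomogeneous_monomial a rfl
    rw [euler, hs.sum_X_mul_pderiv, map_nsmul, homogeneousComponent_of_mem hs]
    split_ifs with h <;> simp [h]
  | add f g hf hg =>
    simp only [euler, map_add, mul_add, sum_add_distrib, smul_add] at hf hg ⊢
    rw [hf, hg]

noncomputable def normSq : MvPolynomial σ R := ∑ i, X i ^ 2

theorem isHomogeneous_normSq : (normSq : MvPolynomial σ R).IsHomogeneous 2 :=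
  IsHomogeneous.sum _ _ _ fun i _ => isHomogeneous_X_pow i 2

theorem normSq_ne_zero [Nontrivial R] [Nonempty σ] : (normSq : MvPolynomial σ R) ≠ 0 := by
  classical
  obtain ⟨i⟩ := ‹Nonempty σ›
  intro h
  simpa [normSq, Pi.single_apply] using congrArg (eval (Pi.single i 1)) h

theorem pderiv_normSq (j : σ) : pderiv j (normSq : MvPolynomial σ R) = 2 * X j := by
  classical
  simp [normSq, pderiv_X, Pi.single_apply, mul_comm]

theorem pderiv_sum_X_mul (F : σ → MvPolynomial σ R) (j : σ) :
    pderiv j (∑ i, X i * F i) = F j + ∑ i, X i * pderiv j (F i) := by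
  classical
  simp [pderiv_X, Pi.single_apply, sum_add_distrib, add_comm]

end CommSemiring

attribute [local instance] gradedAlgebra in
theorem dvd_sub_homogeneousComponent_of_dvd_euler_sub [Field K] [CharZero K]
    {p f : MvPolynomial σ K} {d k : ℕ} (hp : p.IsHomogeneous d) (h : p ∣ euler f - k • f) :
    p ∣ f - homogeneousComponent k f := by
  have hI : (Ideal.span {p}).IsHomogeneous (homogeneousSubmodule σ K) :=
    Ideal.homogeneous_span _ _ (by rintro _ rfl; exact ⟨d, hp⟩)
  rw [← Ideal.mem_span_singleton] at h ⊢
  rw [mem_iff_homogeneousComponent_mem hI]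
  intro n
  have hn := homogeneousComponent_mem_of_mem hI h n
  rw [map_sub, homogeneousComponent_euler, map_nsmul, ← Nat.cast_smul_eq_nsmul K,
    ← Nat.cast_smul_eq_nsmul K, ← sub_smul] at hn
  rw [map_sub, homogeneousComponent_of_mem (homogeneousComponent_mem k f)]
  split_ifs with hkn
  · simp [hkn]
  · have hne : (n - k : K) ≠ 0 := sub_ne_zero.mpr (by exact_mod_cast hkn)
    simpa [inv_smul_smul₀ hne] using Submodule.smul_of_tower_mem _ (n - k : K)⁻¹ hn

section CommRing
variable [CommRing R]

noncomputable def curl (F : σ → MvPolynomial σ R) (i j : σ) : MvPolynomial σ R :=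
  pderiv j (F i) - pderiv i (F j)

/-- `∂ⱼ (Fᵢ / normSq) = ∂ᵢ (Fⱼ / normSq)`, with the denominators cleared. -/
def IsClosedDivNormSq (F : σ → MvPolynomial σ R) : Prop :=
  ∀ i j, normSq * curl F i j = 2 * (F i * X j - F j * X i)

theorem sum_X_mul_pderiv_eq_euler_add (F : σ → MvPolynomial σ R) (j : σ) :
    ∑ i, X i * pderiv j (F i) = euler (F j) + ∑ i, X i * curl F i j := by
  rw [euler, ← sum_add_distrib]
  exact sum_congr rfl fun i _ => by rw [curl]; ring

theorem two_mul_euler_sub_eq_normSq_mul {F : σ → MvPolynomial σ R} {Q : MvPolynomial σ R}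
    (hQ : 2 * ∑ i, X i * F i = normSq * Q)
    (hR : ∀ j, 2 * F j + ∑ i, X i * curl F i j = X j * Q) (j : σ) :
    2 * (euler (F j) - F j) = normSq * pderiv j Q := by
  have h := congrArg (pderiv j) hQ
  have h2 : pderiv j (2 : MvPolynomial σ R) = 0 := by simpa using (pderiv j).map_natCast 2
  simp only [pderiv_mul, h2, zero_mul, zero_add, pderiv_normSq, pderiv_sum_X_mul,
    sum_X_mul_pderiv_eq_euler_add] at h
  linear_combination h - 2 * hR j

namespace IsClosedDivNormSq

variable {F : σ → MvPolynomial σ R}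

theorem normSq_mul_two_mul_add_sum_X_mul_curl (hF : IsClosedDivNormSq F) (j : σ) :
    normSq * (2 * F j + ∑ i, X i * curl F i j) = X j * (2 * ∑ i, X i * F i) := by
  calc normSq * (2 * F j + ∑ i, X i * curl F i j)
      = 2 * normSq * F j + ∑ i, X i * (normSq * curl F i j) := by
        rw [mul_add, mul_sum]
        congr 1
        · ring
        · exact sum_congr rfl fun i _ => by ring
    _ = ∑ i, (2 * X i ^ 2 * F j + X i * (2 * (F i * X j - F j * X i))) := by
        simp_rw [hF _ j]
        rw [sum_add_distrib, normSq, mul_sum, sum_mul]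
    _ = X j * (2 * ∑ i, X i * F i) := by
        rw [mul_sum, mul_sum]
        exact sum_congr rfl fun i _ => by ring

variable [IsDomain R]

theorem normSq_dvd_two_mul_sum_X_mul (hF : IsClosedDivNormSq F) {i j : σ} (hij : i ≠ j) :
    normSq ∣ 2 * ∑ k, X k * F k :=
  dvd_of_dvd_X_mul_of_dvd_X_mul hij ⟨_, (hF.normSq_mul_two_mul_add_sum_X_mul_curl i).symm⟩
    ⟨_, (hF.normSq_mul_two_mul_add_sum_X_mul_curl j).symm⟩

theorem two_mul_add_sum_X_mul_curl_eq (hF : IsClosedDivNormSq F) {Q : MvPolynomial σ R}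
    (hQ : 2 * ∑ i, X i * F i = normSq * Q) (j : σ) :
    2 * F j + ∑ i, X i * curl F i j = X j * Q := by
  have : Nonempty σ := ⟨j⟩
  refine mul_left_cancel₀ normSq_ne_zero ?_
  rw [hF.normSq_mul_two_mul_add_sum_X_mul_curl, hQ]
  ring

theorem X_mul_curl_add_X_mul_curl_add_X_mul_curl (hF : IsClosedDivNormSq F) (i j k : σ) :
    X k * curl F i j + X i * curl F j k + X j * curl F k i = 0 :=
  have : Nonempty σ := ⟨k⟩
  mul_left_cancel₀ normSq_ne_zero <| by
    linear_combination X k * hF i j + X i * hF j k + X j * hF k i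

theorem coeff_zero_curl (hF : IsClosedDivNormSq F) {i j k : σ} (hki : k ≠ i) (hkj : k ≠ j) :
    coeff 0 (curl F i j) = 0 := by
  classical
  simpa [coeff_X_mul', hki.symm, hkj.symm] using
    congrArg (coeff (Finsupp.single k 1)) (hF.X_mul_curl_add_X_mul_curl_add_X_mul_curl i j k)

theorem curl_eq_zero_of_eq_C_mul_X_add_normSq_mul (hF : IsClosedDivNormSq F) {a : R}
    {G : σ → MvPolynomial σ R} (hFG : ∀ j, F j = C a * X j + normSq * G j) (i j : σ) :
    curl G i j = 0 := by
  have : Nonempty σ := ⟨i⟩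
  rcases eq_or_ne i j with rfl | hij
  · exact sub_self _
  have h := hF i j
  simp only [curl, hFG, map_add, pderiv_mul, pderiv_C, pderiv_normSq, pderiv_X_of_ne hij,
    pderiv_X_of_ne hij.symm, zero_mul, mul_zero] at h
  have h' : normSq * normSq * curl G i j = 0 := by
    rw [curl]
    linear_combination h
  simpa [normSq_ne_zero] using h'

end IsClosedDivNormSq

end CommRing

section Field
variable [Field K] [CharZero K] {F : σ → MvPolynomial σ K}

theorem normSq_dvd_sub_homogeneousComponent_one {Q : MvPolynomial σ K}
    (hQ : 2 * ∑ i, X i * F i = normSq * Q)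
    (hR : ∀ j, 2 * F j + ∑ i, X i * curl F i j = X j * Q) (j : σ) :
    normSq ∣ F j - homogeneousComponent 1 (F j) := by
  have h2 : IsUnit (2 : MvPolynomial σ K) := by
    rw [← map_ofNat C 2]
    exact (IsUnit.mk0 (2 : K) two_ne_zero).map C
  refine dvd_sub_homogeneousComponent_of_dvd_euler_sub isHomogeneous_normSq ?_
  rw [one_smul]
  exact h2.dvd_mul_left.mp ⟨_, two_mul_euler_sub_eq_normSq_mul hQ hR j⟩

namespace IsClosedDivNormSq

theorem homogeneousComponent_one_eq_C_mul_X (hF : IsClosedDivNormSq F)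
    (hσ : ∀ i j : σ, ∃ k, k ≠ i ∧ k ≠ j) {Q : MvPolynomial σ K}
    (hR : ∀ j, 2 * F j + ∑ i, X i * curl F i j = X j * Q) (j : σ) :
    homogeneousComponent 1 (F j) = C (coeff 0 Q / 2) * X j := by
  have hX (i : σ) (g : MvPolynomial σ K) :
      homogeneousComponent 1 (X i * g) = X i * C (coeff 0 g) := by
    rw [← homogeneousComponent_zero, ← (isHomogeneous_X K i).homogeneousComponent_add_mul]
  have hcurl (i : σ) : coeff 0 (curl F i j) = 0 := by
    obtain ⟨k, hki, hkj⟩ := hσ i j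
    exact hF.coeff_zero_curl hki hkj
  have h := congrArg (homogeneousComponent 1) (hR j)
  rw [← map_ofNat C 2] at h
  simp only [map_add, map_sum, homogeneousComponent_C_mul, hX, hcurl, C_0, mul_zero,
    sum_const_zero, add_zero] at h
  have h2 : (C (2 : K) * C (coeff 0 Q / 2) : MvPolynomial σ K) = C (coeff 0 Q) := by
    rw [← C_mul, mul_div_cancel₀ _ two_ne_zero]
  refine mul_left_cancel₀ (C_ne_zero.mpr two_ne_zero : C (2 : K) ≠ 0) ?_
  linear_combination h - X j * h2

theorem exists_eq_C_mul_X_add_normSq_mul (hF : IsClosedDivNormSq F)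
    (hσ : 2 < Fintype.card σ) :
    ∃ (a : K) (G : σ → MvPolynomial σ K),
      (∀ j, F j = C a * X j + normSq * G j) ∧ ∀ i j, curl G i j = 0 := by
  obtain ⟨i, j, -, hij, -⟩ := Fintype.two_lt_card_iff.mp hσ
  obtain ⟨Q, hQ⟩ := hF.normSq_dvd_two_mul_sum_X_mul hij
  have hR := hF.two_mul_add_sum_X_mul_curl_eq hQ
  have hdvd (j : σ) : normSq ∣ F j - C (coeff 0 Q / 2) * X j := by
    rw [← hF.homogeneousComponent_one_eq_C_mul_X
      (Fintype.exists_ne_and_ne_of_two_lt_card hσ) hR]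
    exact normSq_dvd_sub_homogeneousComponent_one hQ hR j
  choose G hG using hdvd
  have hFG (j : σ) : F j = C (coeff 0 Q / 2) * X j + normSq * G j :=
    sub_eq_iff_eq_add'.mp (hG j)
  exact ⟨_, G, hFG, hF.curl_eq_zero_of_eq_C_mul_X_add_normSq_mul hFG⟩

end IsClosedDivNormSq

end Field

end MvPolynomial

/-- Three-variable version of Nakanishi's lemma (Lemma 7.2 of the paper). -/
theorem nakanishi_lemma_three_vars (A B C' : MvPolynomial (Fin 3) ℝ)
    (h1 : (X 0 ^ 2 + X 1 ^ 2 + X 2 ^ 2) * (pderiv 1 A - pderiv 0 B)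
        = 2 * (A * X 1 - B * X 0))
    (h2 : (X 0 ^ 2 + X 1 ^ 2 + X 2 ^ 2) * (pderiv 2 A - pderiv 0 C')
        = 2 * (A * X 2 - C' * X 0))
    (h3 : (X 0 ^ 2 + X 1 ^ 2 + X 2 ^ 2) * (pderiv 2 B - pderiv 1 C')
        = 2 * (B * X 2 - C' * X 1)) :
    ∃ (a : ℝ) (At Bt Ct : MvPolynomial (Fin 3) ℝ),
      A = MvPolynomial.C a * X 0 + (X 0 ^ 2 + X 1 ^ 2 + X 2 ^ 2) * At ∧
      B = MvPolynomial.C a * X 1 + (X 0 ^ 2 + X 1 ^ 2 + X 2 ^ 2) * Bt ∧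
      C' = MvPolynomial.C a * X 2 + (X 0 ^ 2 + X 1 ^ 2 + X 2 ^ 2) * Ct ∧
      pderiv 1 At = pderiv 0 Bt ∧
      pderiv 2 At = pderiv 0 Ct ∧
      pderiv 2 Bt = pderiv 1 Ct := by
  have hp : (normSq : MvPolynomial (Fin 3) ℝ) = X 0 ^ 2 + X 1 ^ 2 + X 2 ^ 2 := by
    simp [normSq, Fin.sum_univ_three]
  have hF : IsClosedDivNormSq ![A, B, C'] := by
    intro i j
    rw [hp]
    fin_cases i <;> fin_cases j <;> simp [curl]
    · linear_combination h1
    · linear_combination h2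
    · linear_combination -h1
    · linear_combination h3
    · linear_combination -h2
    · linear_combination -h3
  obtain ⟨a, G, hFG, hG⟩ := hF.exists_eq_C_mul_X_add_normSq_mul (by simp)
  exact ⟨a, G 0, G 1, G 2, by simpa [hp] using hFG 0, by simpa [hp] using hFG 1,
    by simpa [hp] using hFG 2, sub_eq_zero.mp (hG 0 1), sub_eq_zero.mp (hG 0 2),
    sub_eq_zero.mp (hG 1 2)⟩
end

section
/- There is no f ∈ C^∞(R³, R) such that (x1² + x2² + x3²)·(∂f/∂xj)(x) = 2·xj for all x ∈ R³ and all j ∈ {1,2,3}. Equivalently, the function ln(x1² + x2² + x3²), defined on R³ \ {0}, does not extend to a C^∞ (indeed not even continuous) function on all of R³. -/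
/-- There is no smooth function `f : ℝ³ → ℝ` with
`(x₁² + x₂² + x₃²) ∂f/∂xⱼ = 2 xⱼ` for all `x` and `j`; i.e. the modular vector
field of the singular Nambu-Poisson structure `(x₁²+x₂²+x₃²) ∂₁∧∂₂∧∂₃` is not
a Hamiltonian-type gradient, so the modular class is nonzero. -/
theorem no_smooth_log_potential :
    ¬ ∃ f : (Fin 3 → ℝ) → ℝ, ContDiff ℝ (⊤ : ℕ∞) f ∧
      ∀ (x : Fin 3 → ℝ) (j : Fin 3),
        (∑ i, x i ^ 2) * fderiv ℝ f x (Pi.single j 1) = 2 * x j := by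
  rintro ⟨f, hf, hEq⟩
  set L : ℝ →L[ℝ] (Fin 3 → ℝ) := ContinuousLinearMap.pi (Pi.single 0 (ContinuousLinearMap.id ℝ ℝ))
  have hL : ∀ t : ℝ, L t = Pi.single 0 t := by
    intro t
    funext i
    simp only [L, ContinuousLinearMap.pi_apply, Pi.single_apply]
    split <;> simp
  set g : ℝ → ℝ := fun t => f (L t) with hg
  -- derivative of g at t ≠ 0 is 2 / t
  have hderiv : ∀ t : ℝ, t ≠ 0 → HasDerivAt g (2 / t) t := by
    intro t ht
    have h1 : HasDerivAt (fun s : ℝ => L s) (L 1) t := L.hasDerivAt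
    have h2 : HasFDerivAt f (fderiv ℝ f (L t)) (L t) :=
      (hf.differentiable (by simp) (L t)).hasFDerivAt
    have h3 : HasDerivAt g (fderiv ℝ f (L t) (L 1)) t := h2.comp_hasDerivAt t h1
    have key := hEq (L t) 0
    have hsum : (∑ i, (L t) i ^ 2) = t ^ 2 := by
      simp [hL, Fin.sum_univ_three, Pi.single_apply]
    have hx0 : (L t) 0 = t := by simp [hL]
    rw [hsum, hx0] at key
    have : fderiv ℝ f (L t) (Pi.single 0 1) = 2 / t := by
      rw [eq_div_iff ht]
      have key' : (fderiv ℝ f (L t) (Pi.single 0 1) * t) * t = 2 * t := by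
        linear_combination key
      exact mul_right_cancel₀ ht key'
    rw [hL 1] at h3
    rwa [this] at h3
  -- g t = g 1 + 2 * log t on (0, 1]
  have hform : ∀ t : ℝ, 0 < t → t ≤ 1 → g t = g 1 + 2 * Real.log t := by
    intro t ht ht1
    set h : ℝ → ℝ := fun s => g s - 2 * Real.log s with hh
    have hconst : ∀ y ∈ Set.Icc t 1, h y = h t := by
      apply constant_of_has_deriv_right_zero
      · intro s hs
        have hs0 : 0 < s := lt_of_lt_of_le ht hs.1
        exact ((hderiv s hs0.ne').sub
          ((Real.hasDerivAt_log hs0.ne').const_mul 2)).continuousAt.continuousWithinAt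
      · intro s hs
        have hs0 : 0 < s := lt_of_lt_of_le ht hs.1
        have : HasDerivAt h (2 / s - 2 * s⁻¹) s :=
          (hderiv s hs0.ne').sub ((Real.hasDerivAt_log hs0.ne').const_mul 2)
        have h0 : (2 / s - 2 * s⁻¹) = 0 := by field_simp; ring
        rw [h0] at this
        exact this.hasDerivWithinAt
    have := hconst 1 ⟨ht1, le_refl 1⟩
    simp only [hh] at this
    have hlog1 : Real.log 1 = 0 := Real.log_one
    rw [hlog1] at this
    linarith
  -- continuity of g at 0 gives a bound near 0
  have hgcont : ContinuousAt g 0 := ((hf.continuous).comp L.continuous).continuousAt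
  -- g (exp (-(n+1))) = g 1 - 2 (n+1) → -∞, contradiction with boundedness near 0
  have htend0 : Filter.Tendsto (fun n : ℕ => Real.exp (-(n+1 : ℝ))) Filter.atTop (nhds 0) := by
    have : Filter.Tendsto (fun n : ℕ => -(n+1 : ℝ)) Filter.atTop Filter.atBot := by
      apply Filter.tendsto_neg_atBot_iff.mpr
      exact Filter.tendsto_atTop_add_const_right _ 1 tendsto_natCast_atTop_atTop
    exact Real.tendsto_exp_atBot.comp this
  have hgt : Filter.Tendsto (fun n : ℕ => g (Real.exp (-(n+1 : ℝ)))) Filter.atTop (nhds (g 0)) :=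
    hgcont.tendsto.comp htend0
  have hval : ∀ n : ℕ, g (Real.exp (-(n+1 : ℝ))) = g 1 - 2 * (n+1 : ℝ) := by
    intro n
    have hpos : (0:ℝ) < Real.exp (-(n+1 : ℝ)) := Real.exp_pos _
    have hle : Real.exp (-(n+1 : ℝ)) ≤ 1 := by
      apply Real.exp_le_one_iff.mpr
      have : (0:ℝ) ≤ (n:ℝ) := Nat.cast_nonneg n
      linarith
    rw [hform _ hpos hle, Real.log_exp]; ring
  have hbot : Filter.Tendsto (fun n : ℕ => g (Real.exp (-(n+1 : ℝ)))) Filter.atTop Filter.atBot := by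
    simp only [hval]
    apply Filter.tendsto_atBot_add_const_left
    apply Filter.tendsto_neg_atBot_iff.mpr
    have : Filter.Tendsto (fun n : ℕ => (n+1 : ℝ)) Filter.atTop Filter.atTop :=
      Filter.tendsto_atTop_add_const_right _ 1 tendsto_natCast_atTop_atTop
    simpa [mul_comm] using this.const_mul_atTop (by norm_num : (0:ℝ) < 2)
  exact not_tendsto_nhds_of_tendsto_atBot hbot (g 0) hgt
end
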